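/- If s ≥ 2 is an even natural number and n ≥ 1 is an odd natural number, then c(n + s) + c(n) + s > c(2n + s). -/
import Mathlib


/-- The Colless index of the maximally balanced bifurcating tree with `n` leaves:
`c 1 = 0` and `c n = c ⌈n/2⌉ + c ⌊n/2⌋ + (⌈n/2⌉ - ⌊n/2⌋)` for `n ≥ 2`. -/
def c : ℕ → ℕ
  | 0 => 0
  | 1 => 0
  | n + 2 => c ((n + 3) / 2) + c ((n + 2) / 2) + ((n + 3) / 2 - (n + 2) / 2)
decreasing_by all_goals omega

lemma c_rec (n : ℕ) : c (n+2) = c ((n+3)/2) + c ((n+2)/2) + ((n+3)/2 - (n+2)/2) := by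
  rw [c]

lemma c_even (m : ℕ) : c (2*m) = 2 * c m := by
  match m with
  | 0 => simp [c]
  | k+1 =>
    rw [show 2*(k+1) = 2*k+2 by ring, c_rec, show (2*k+3)/2 = k+1 by omega,
      show (2*k+2)/2 = k+1 by omega]
    omega

lemma c_odd (m : ℕ) (h : 1 ≤ m) : c (2*m+1) = c (m+1) + c m + 1 := by
  obtain ⟨k, rfl⟩ := Nat.exists_eq_add_of_le h
  rw [show 2*(1+k)+1 = 2*k+1+2 by ring, c_rec, show (2*k+1+3)/2 = k+2 by omega,
    show (2*k+1+2)/2 = k+1 by omega, show 1+k+1 = k+2 by omega, show 1+k = k+1 by omega]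
  omega

lemma c_lt (n : ℕ) (h : 1 ≤ n) : c n < n := by
  induction n using Nat.strong_induction_on with
  | _ n ih =>
    match n, h with
    | 1, _ => simp [c]
    | n+2, _ =>
      rcases Nat.even_or_odd (n+2) with ⟨m, hm⟩ | ⟨m, hm⟩
      · have h1 : c (2*m) = 2 * c m := c_even m
        have h2 : c m < m := ih m (by omega) (by omega)
        rw [show n+2 = 2*m by omega]; omega
      · have h1 : c (2*m+1) = c (m+1) + c m + 1 := c_odd m (by omega)
        have h2 : c m < m := ih m (by omega) (by omega)
        have h3 : c (m+1) < m+1 := ih (m+1) (by omega) (by omega)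
        rw [show n+2 = 2*m+1 by omega]; omega

lemma cAB : ∀ N x u : ℕ, x + u ≤ N →
    2 * c (x+u) ≤ c x + c (x+2*u) + 2*u ∧
    c (x+u) + c (x+u+1) ≤ c x + c (x+2*u+1) + 2*u := by
  intro N
  induction N with
  | zero =>
    intro x u h
    have hx : x = 0 := by omega
    have hu : u = 0 := by omega
    subst hx hu; constructor <;> simp <;> omega
  | succ N ih =>
    intro x u h
    rcases Nat.eq_zero_or_pos u with rfl | hu
    · constructor <;> simp <;> omega
    rcases eq_or_ne x 1 with rfl | hx1
    · -- x = 1 : crude bound via c_lt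
      have e1 : c 1 = 0 := by simp [c]
      have e2 : c (1+2*u) = c (u+1) + c u + 1 := by
        rw [show 1+2*u = 2*u+1 by omega, c_odd u hu]
      have e3 : c (1+2*u+1) = 2 * c (u+1) := by
        rw [show 1+2*u+1 = 2*(u+1) by omega, c_even]
      have e4 : c (1+u) = c (u+1) := by rw [show 1+u = u+1 by omega]
      have e5 : c (1+u+1) = c (u+2) := by rw [show 1+u+1 = u+2 by omega]
      have L1 : c (u+1) < u+1 := c_lt (u+1) (by omega)
      have L2 : c (u+2) < u+2 := c_lt (u+2) (by omega)
      omega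
    rcases Nat.even_or_odd x with ⟨y, hy⟩ | ⟨y, hy⟩
    · -- x even
      rcases Nat.even_or_odd u with ⟨v, hv⟩ | ⟨v, hv⟩
      · -- x = 2y, u = 2v, v ≥ 1
        have hv1 : 1 ≤ v := by omega
        have e1 : c x = 2 * c y := by rw [show x = 2*y by omega, c_even]
        have e2 : c (x+2*u) = 2 * c (y+2*v) := by
          rw [show x+2*u = 2*(y+2*v) by omega, c_even]
        have e3 : c (x+u) = 2 * c (y+v) := by
          rw [show x+u = 2*(y+v) by omega, c_even]
        have e4 : c (x+2*u+1) = c (y+2*v+1) + c (y+2*v) + 1 := by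
          rw [show x+2*u+1 = 2*(y+2*v)+1 by omega, c_odd (y+2*v) (by omega)]
        have e5 : c (x+u+1) = c (y+v+1) + c (y+v) + 1 := by
          rw [show x+u+1 = 2*(y+v)+1 by omega, c_odd (y+v) (by omega)]
        have hIH := ih y v (by omega)
        omega
      · -- x = 2y, u = 2v+1
        rcases Nat.eq_zero_or_pos (y+v) with hyv | hyv
        · -- x = 0, u = 1
          have hy0 : x = 0 := by omega
          have hv0 : u = 1 := by omega
          subst hy0 hv0
          have e0 : c 0 = 0 := by simp [c]
          have e1 : c 1 = 0 := by simp [c]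
          have e2 : c 2 = 0 := by rw [show (2:ℕ) = 0+2 from rfl, c_rec]; simp [c]
          have e3 : c 3 = 1 := by rw [show (3:ℕ) = 1+2 from rfl, c_rec]; simp [c]
          norm_num [e0, e1, e2, e3]
        have e1 : c x = 2 * c y := by rw [show x = 2*y by omega, c_even]
        have e2 : c (x+2*u) = 2 * c (y+2*v+1) := by
          rw [show x+2*u = 2*(y+2*v+1) by omega, c_even]
        have e3 : c (x+u) = c (y+v+1) + c (y+v) + 1 := by
          rw [show x+u = 2*(y+v)+1 by omega, c_odd (y+v) (by omega)]
        have e4 : c (x+2*u+1) = c (y+2*v+2) + c (y+2*v+1) + 1 := by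
          rw [show x+2*u+1 = 2*(y+2*v+1)+1 by omega, c_odd (y+2*v+1) (by omega)]
        have e5 : c (x+u+1) = 2 * c (y+v+1) := by
          rw [show x+u+1 = 2*(y+v+1) by omega, c_even]
        have hIH1 := ih y (v+1) (by omega)
        rw [show y+2*(v+1)+1 = y+2*v+3 by ring, show y+(v+1)+1 = y+v+2 by ring,
          show y+2*(v+1) = y+2*v+2 by ring, show y+(v+1) = y+v+1 by ring] at hIH1
        have hIH2 := ih y v (by omega)
        omega
    · -- x odd, x = 2y+1, y ≥ 1 (x ≠ 1 handled above)
      have hy1 : 1 ≤ y := by omega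
      have e1 : c x = c (y+1) + c y + 1 := by
        rw [show x = 2*y+1 by omega, c_odd y hy1]
      rcases Nat.even_or_odd u with ⟨v, hv⟩ | ⟨v, hv⟩
      · -- u = 2v, v ≥ 1
        have hv1 : 1 ≤ v := by omega
        have e2 : c (x+2*u) = c (y+2*v+1) + c (y+2*v) + 1 := by
          rw [show x+2*u = 2*(y+2*v)+1 by omega, c_odd (y+2*v) (by omega)]
        have e3 : c (x+u) = c (y+v+1) + c (y+v) + 1 := by
          rw [show x+u = 2*(y+v)+1 by omega, c_odd (y+v) (by omega)]
        have e4 : c (x+2*u+1) = 2 * c (y+2*v+1) := by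
          rw [show x+2*u+1 = 2*(y+2*v+1) by omega, c_even]
        have e5 : c (x+u+1) = 2 * c (y+v+1) := by
          rw [show x+u+1 = 2*(y+v+1) by omega, c_even]
        have hIH1 := ih y v (by omega)
        have hIH2 := ih (y+1) v (by omega)
        rw [show y+1+2*v+1 = y+2*v+2 by ring, show y+1+v+1 = y+v+2 by ring,
          show y+1+2*v = y+2*v+1 by ring, show y+1+v = y+v+1 by ring] at hIH2
        omega
      · -- u = 2v+1
        have e2 : c (x+2*u) = c (y+2*v+2) + c (y+2*v+1) + 1 := by
          rw [show x+2*u = 2*(y+2*v+1)+1 by omega, c_odd (y+2*v+1) (by omega)]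
        have e3 : c (x+u) = 2 * c (y+v+1) := by
          rw [show x+u = 2*(y+v+1) by omega, c_even]
        have e4 : c (x+2*u+1) = 2 * c (y+2*v+2) := by
          rw [show x+2*u+1 = 2*(y+2*v+2) by omega, c_even]
        have e5 : c (x+u+1) = c (y+v+2) + c (y+v+1) + 1 := by
          rw [show x+u+1 = 2*(y+v+1)+1 by omega, c_odd (y+v+1) (by omega)]
        have hIH1 := ih y (v+1) (by omega)
        rw [show y+2*(v+1)+1 = y+2*v+3 by ring, show y+(v+1)+1 = y+v+2 by ring,
          show y+2*(v+1) = y+2*v+2 by ring, show y+(v+1) = y+v+1 by ring] at hIH1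
        have hIH2 := ih (y+1) v (by omega)
        rw [show y+1+2*v+1 = y+2*v+2 by ring, show y+1+v+1 = y+v+2 by ring,
          show y+1+2*v = y+2*v+1 by ring, show y+1+v = y+v+1 by ring] at hIH2
        omega

lemma cA (x u : ℕ) : 2 * c (x+u) ≤ c x + c (x+2*u) + 2*u := (cAB (x+u) x u le_rfl).1

lemma cB (x u : ℕ) : c (x+u) + c (x+u+1) ≤ c x + c (x+2*u+1) + 2*u := (cAB (x+u) x u le_rfl).2

lemma cS : ∀ u x : ℕ, 1 ≤ u → Odd x → 2 * c (x+u) < c x + c (x+2*u) + 2*u := by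
  intro u
  induction u using Nat.strong_induction_on with
  | _ u ih =>
    intro x hu hx
    rcases eq_or_ne x 1 with rfl | hx1
    · have e1 : c 1 = 0 := by simp [c]
      have e2 : c (1+2*u) = c (u+1) + c u + 1 := by
        rw [show 1+2*u = 2*u+1 by omega, c_odd u hu]
      have e4 : c (1+u) = c (u+1) := by rw [show 1+u = u+1 by omega]
      have L1 : c (u+1) < u+1 := c_lt (u+1) (by omega)
      omega
    obtain ⟨y, hy⟩ := hx
    have hy1 : 1 ≤ y := by omega
    have e1 : c x = c (y+1) + c y + 1 := by
      rw [show x = 2*y+1 by omega, c_odd y hy1]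
    rcases Nat.even_or_odd u with ⟨v, hv⟩ | ⟨v, hv⟩
    · -- u = 2v, v ≥ 1
      have hv1 : 1 ≤ v := by omega
      have e2 : c (x+2*u) = c (y+2*v+1) + c (y+2*v) + 1 := by
        rw [show x+2*u = 2*(y+2*v)+1 by omega, c_odd (y+2*v) (by omega)]
      have e3 : c (x+u) = c (y+v+1) + c (y+v) + 1 := by
        rw [show x+u = 2*(y+v)+1 by omega, c_odd (y+v) (by omega)]
      rcases Nat.even_or_odd y with ⟨z, hz⟩ | hyo
      · -- y even, y+1 odd: strict at (y+1, v), weak at (y, v)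
        have hS := ih v (by omega) (y+1) hv1 ⟨y/2, by omega⟩
        rw [show y+1+2*v = y+2*v+1 by ring, show y+1+v = y+v+1 by ring] at hS
        have hW := cA y v
        omega
      · -- y odd: strict at (y, v), weak at (y+1, v)
        have hS := ih v (by omega) y hv1 hyo
        have hW := cA (y+1) v
        rw [show y+1+2*v = y+2*v+1 by ring, show y+1+v = y+v+1 by ring] at hW
        omega
    · -- u = 2v+1 : unconditional slack 2
      have e2 : c (x+2*u) = c (y+2*v+2) + c (y+2*v+1) + 1 := by
        rw [show x+2*u = 2*(y+2*v+1)+1 by omega, c_odd (y+2*v+1) (by omega)]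
      have e3 : c (x+u) = 2 * c (y+v+1) := by
        rw [show x+u = 2*(y+v+1) by omega, c_even]
      have hW1 := cA y (v+1)
      rw [show y+2*(v+1) = y+2*v+2 by ring, show y+(v+1) = y+v+1 by ring] at hW1
      have hW2 := cA (y+1) v
      rw [show y+1+2*v = y+2*v+1 by ring, show y+1+v = y+v+1 by ring] at hW2
      omega

/-- If `s ≥ 2` is even and `n ≥ 1` is odd, then `c (n + s) + c n + s > c (2n + s)`. -/
theorem c_strict_of_even_odd (n s : ℕ) (hs : 2 ≤ s) (hse : Even s)
    (hn : 1 ≤ n) (hno : Odd n) :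
    c (n + s) + c n + s > c (2 * n + s) := by
  obtain ⟨t, ht⟩ := hse
  have e : c (2*n+s) = 2 * c (n+t) := by
    rw [show 2*n+s = 2*(n+t) by omega, c_even]
  have hS := cS t n (by omega) hno
  rw [show n+s = n+2*t by omega]
  omega
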